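/- Let h be a potential on a recurrent rooted network (G,c,o) and let {Y_n} be the h-process. Then the Green kernel of the h-process satisfies G^h(x,y) = G_o(x,y)·h(y)/h(x) for all x,y in S_h = {v : h(v)>0}; in particular the h-process is transient. -/

import Mathlib

open scoped Classical
open Filter Topology MeasureTheory ProbabilityTheory

/-- A weighted network: an infinite, connected, locally finite graph with
positive edge conductances, encoded by a symmetric conductance function. -/
structure Network (V : Type*) where
  c : V → V → ℝ
  symm : ∀ x y, c x y = c y x
  nonneg : ∀ x y, 0 ≤ c x y
  locFin : ∀ x, {y | 0 < c x y}.Finite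
  conn : ∀ x y, Relation.ReflTransGen (fun a b => 0 < c a b) x y
  deg_pos : ∀ x, 0 < ∑' y, c x y
  infinite : Infinite V

namespace Network

variable {V : Type*} (N : Network V)

/-- Total conductance at a vertex. -/
noncomputable def cTot (x : V) : ℝ := ∑' y, N.c x y

/-- One-step transition probabilities of the network random walk. -/
noncomputable def p (x y : V) : ℝ := N.c x y / N.cTot x

/-- `n`-step transition probabilities of the network random walk. -/
noncomputable def pstep : ℕ → V → V → ℝ
  | 0, x, y => if x = y then 1 else 0
  | n + 1, x, y => ∑' z, pstep n x z * N.p z y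

/-- The network random walk is recurrent: the expected number of returns is infinite. -/
def Recurrent : Prop := ∀ x : V, ¬ Summable (fun n => N.pstep n x x)

/-- `avoid A n x y` is the probability that the walk started at `x` is at `y` at time `n`
without having visited the set `A` at any time `0,…,n`, i.e. `P_x(X_n = y, τ_A > n)`. -/
noncomputable def avoid (A : Set V) : ℕ → V → V → ℝ
  | 0, x, y => if x = y ∧ x ∉ A then 1 else 0
  | n + 1, x, y => if y ∈ A then 0 else ∑' z, avoid A n x z * N.p z y

/-- Green kernel of the walk killed at `o`:  `G_o(x,y) = Σ_n P_x(X_n = y, τ_o > n)`. -/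
noncomputable def GreenK (o x y : V) : ℝ := ∑' n, N.avoid {o} n x y

/-- Green density of the walk killed at `o`:  `g_o(x,y) = G_o(x,y)/c_y`. -/
noncomputable def g (o x y : V) : ℝ := N.GreenK o x y / N.cTot y

/-- The network Laplacian `Δf(v) = Σ_x c_{vx}(f(x) − f(v))`. -/
noncomputable def lap (f : V → ℝ) (v : V) : ℝ := ∑' x, N.c v x * (f x - f v)

/-- A potential on the rooted network `(G,c,o)`: a nonnegative function vanishing at `o`,
with Laplacian `1` at `o` and harmonic elsewhere. -/
def IsPotential (o : V) (h : V → ℝ) : Prop :=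
  (∀ v, 0 ≤ h v) ∧ h o = 0 ∧ N.lap h o = 1 ∧ ∀ v, v ≠ o → N.lap h v = 0

/-- Harmonic measure from `v` on a set `A`:  `ω_v^A(z) = P_v(X_{τ_A} = z)`. -/
noncomputable def harm (A : Set V) (v z : V) : ℝ :=
  if v ∈ A then (if v = z then 1 else 0)
  else if z ∈ A then ∑' n, ∑' w, N.avoid A n v w * N.p w z
  else 0

/-- Effective resistance `R_eff(x ↔ y) = g_x(y,y)`. -/
noncomputable def Reff (x y : V) : ℝ := N.g x y y

/-- Transition probabilities of the Doob `h`-transform: `p^h(x,y) = p(x,y) h(y)/h(x)`. -/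
noncomputable def ph (h : V → ℝ) (x y : V) : ℝ := N.p x y * h y / h x

/-- `n`-step transition probabilities of the `h`-process. -/
noncomputable def phstep (h : V → ℝ) : ℕ → V → V → ℝ
  | 0, x, y => if x = y then 1 else 0
  | n + 1, x, y => ∑' z, phstep h n x z * N.ph h z y

/-- The initial distribution `μ_h(v) = c_{ov} h(v)`. -/
noncomputable def muh (o : V) (h : V → ℝ) (v : V) : ℝ := N.c o v * h v

end Network

/-- `P` is the law of the Markov chain with initial distribution `μ` and transition
probabilities `q`, as a measure on trajectory space. -/
def IsChainLaw {S : Type*} [MeasurableSpace S] (μ : S → ℝ) (q : S → S → ℝ)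
    (P : MeasureTheory.Measure (ℕ → S)) : Prop :=
  ∀ (n : ℕ) (v : ℕ → S),
    P {ω | ∀ i ≤ n, ω i = v i} =
      ENNReal.ofReal (μ (v 0) * ∏ i ∈ Finset.range n, q (v i) (v (i + 1)))

namespace Network
section Aux
open Finset
variable {V : Type*} (N : Network V)

lemma c_supp_finite (x : V) : {y | N.c x y ≠ 0}.Finite := by
  apply (N.locFin x).subset
  intro y hy
  exact lt_of_le_of_ne (N.nonneg x y) (Ne.symm hy)

lemma summable_c (x : V) : Summable (N.c x) :=
  summable_of_ne_finset_zero (s := (N.c_supp_finite x).toFinset)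
    (fun y hy => by simpa using fun h => hy ((N.c_supp_finite x).mem_toFinset.2 h))

lemma cTot_pos (x : V) : 0 < N.cTot x := N.deg_pos x

lemma p_nonneg (x y : V) : 0 ≤ N.p x y := div_nonneg (N.nonneg x y) (N.cTot_pos x).le

lemma summable_p (x : V) : Summable (N.p x) := (N.summable_c x).div_const _

lemma tsum_p (x : V) : ∑' y, N.p x y = 1 := by
  unfold p
  rw [tsum_div_const]
  exact div_self (N.cTot_pos x).ne'

lemma p_supp_finite (x : V) : {y | N.p x y ≠ 0}.Finite := by
  apply (N.c_supp_finite x).subset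
  intro y hy h
  exact hy (by simp [Network.p, h])

end Aux
end Network
namespace Network
variable {V : Type*} (N : Network V)

lemma summable_finsupp {f : V → ℝ} (h : {y | f y ≠ 0}.Finite) : Summable f :=
  summable_of_ne_finset_zero (s := h.toFinset)
    (fun y hy => by by_contra hf; exact hy (h.mem_toFinset.2 hf))

lemma tsum_finsupp {f : V → ℝ} {s : Finset V} (h : ∀ y ∉ s, f y = 0) :
    ∑' y, f y = ∑ y ∈ s, f y := tsum_eq_sum h

lemma avoid_nonneg (A : Set V) : ∀ (n : ℕ) (x y : V), 0 ≤ N.avoid A n x y := by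
  intro n
  induction n with
  | zero => intro x y; unfold avoid; split <;> simp
  | succ n ih =>
    intro x y
    show (0:ℝ) ≤ if y ∈ A then 0 else ∑' z, N.avoid A n x z * N.p z y
    split
    · exact le_refl _
    · exact tsum_nonneg fun z => mul_nonneg (ih x z) (N.p_nonneg z y)

lemma avoid_supp_finite (A : Set V) (n : ℕ) (x : V) :
    {y | N.avoid A n x y ≠ 0}.Finite := by
  induction n with
  | zero =>
    apply Set.Finite.subset (Set.finite_singleton x)
    intro y hy
    simp only [Set.mem_setOf_eq, Network.avoid] at hy
    by_contra hxy
    rw [Set.mem_singleton_iff] at hxy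
    exact hy (if_neg (fun h => hxy h.1.symm))
  | succ n ih =>
    apply Set.Finite.subset (ih.biUnion (fun z _ => N.p_supp_finite z))
    intro y hy
    simp only [Set.mem_setOf_eq] at hy
    have : N.avoid A (n+1) x y = if y ∈ A then 0 else ∑' z, N.avoid A n x z * N.p z y := rfl
    rw [this] at hy
    have hsum : (∑' z, N.avoid A n x z * N.p z y) ≠ 0 := by
      intro h0; rw [h0] at hy; simp at hy
    have : ∃ z, N.avoid A n x z * N.p z y ≠ 0 := by
      by_contra hall
      push_neg at hall
      exact hsum (by simp [hall])
    obtain ⟨z, hz⟩ := this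
    exact Set.mem_biUnion (left_ne_zero_of_mul hz) (right_ne_zero_of_mul hz)

lemma summable_avoid_mul (A : Set V) (n : ℕ) (x : V) (g : V → ℝ) :
    Summable (fun z => N.avoid A n x z * g z) :=
  summable_finsupp <| (N.avoid_supp_finite A n x).subset
    (fun z hz => left_ne_zero_of_mul hz)

end Network
namespace Network
variable {V : Type*} (N : Network V)

lemma tsum_tsum_comm_fin {f : V → V → ℝ} (hw : {w | ∃ z, f w z ≠ 0}.Finite)
    (hz : ∀ w, {z | f w z ≠ 0}.Finite) :
    ∑' z, ∑' w, f w z = ∑' w, ∑' z, f w z := by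
  classical
  set s : Finset V := hw.toFinset with hs
  set t : Finset V := s.biUnion (fun w => (hz w).toFinset) with ht
  have hfw0 : ∀ w ∉ s, ∀ z, f w z = 0 := by
    intro w hws z
    by_contra h
    exact hws (hw.mem_toFinset.2 ⟨z, h⟩)
  have hft0 : ∀ w, ∀ z ∉ t, f w z = 0 := by
    intro w z hzt
    by_cases hws : w ∈ s
    · by_contra h
      exact hzt (Finset.mem_biUnion.2 ⟨w, hws, (hz w).mem_toFinset.2 h⟩)
    · exact hfw0 w hws z
  have h1 : ∑' z, ∑' w, f w z = ∑ z ∈ t, ∑ w ∈ s, f w z := by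
    rw [tsum_eq_sum (s := t) (fun z hz' => by
      have : ∀ w, f w z = 0 := fun w => hft0 w z hz'
      simp [this])]
    exact Finset.sum_congr rfl fun z _ => tsum_eq_sum (fun w hws => hfw0 w hws z)
  have h2 : ∑' w, ∑' z, f w z = ∑ w ∈ s, ∑ z ∈ t, f w z := by
    rw [tsum_eq_sum (s := s) (fun w hws => by simp [hfw0 w hws])]
    exact Finset.sum_congr rfl fun w _ => tsum_eq_sum (fun z hzt => hft0 w z hzt)
  rw [h1, h2, Finset.sum_comm]

lemma stepf_supp_finite {a : V → ℝ} (ha : {w | a w ≠ 0}.Finite) :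
    {z | (∑' w, a w * N.p w z) ≠ 0}.Finite := by
  apply Set.Finite.subset (ha.biUnion (fun w _ => N.p_supp_finite w))
  intro z hz
  simp only [Set.mem_setOf_eq] at hz
  have : ∃ w, a w * N.p w z ≠ 0 := by
    by_contra hall
    push_neg at hall
    exact hz (by simp [hall])
  obtain ⟨w, hwz⟩ := this
  exact Set.mem_biUnion (left_ne_zero_of_mul hwz) (right_ne_zero_of_mul hwz)

lemma tsum_stepf {a : V → ℝ} (ha : {w | a w ≠ 0}.Finite) :
    ∑' z, ∑' w, a w * N.p w z = ∑' w, a w := by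
  rw [tsum_tsum_comm_fin (f := fun w z => a w * N.p w z)
    (ha.subset (fun w hw => by
      obtain ⟨z, hz⟩ := hw
      exact left_ne_zero_of_mul hz))
    (fun w => (N.p_supp_finite w).subset (fun z hz => right_ne_zero_of_mul hz))]
  exact tsum_congr (fun w => by rw [tsum_mul_left, N.tsum_p, mul_one])

lemma summable_stepf {a : V → ℝ} (ha : {w | a w ≠ 0}.Finite) :
    Summable (fun z => ∑' w, a w * N.p w z) :=
  summable_finsupp (N.stepf_supp_finite ha)

lemma stepf_nonneg {a : V → ℝ} (ha : ∀ w, 0 ≤ a w) (z : V) :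
    0 ≤ ∑' w, a w * N.p w z :=
  tsum_nonneg fun w => mul_nonneg (ha w) (N.p_nonneg w z)

/-- killed mass decreases, quantitatively at a point of `A`. -/
lemma avoid_mass_step (A : Set V) (x : V) (n : ℕ) (y : V) (hy : y ∈ A) :
    (∑' z, N.avoid A (n+1) x z) + (∑' w, N.avoid A n x w * N.p w y)
      ≤ ∑' z, N.avoid A n x z := by
  classical
  set f : V → ℝ := fun z => ∑' w, N.avoid A n x w * N.p w z with hf
  have hasupp := N.avoid_supp_finite A n x
  have hfsum : Summable f := N.summable_stepf hasupp
  have hfnn : ∀ z, 0 ≤ f z := N.stepf_nonneg (fun w => N.avoid_nonneg A n x w)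
  have hle : ∀ z, N.avoid A (n+1) x z ≤ (if z = y then 0 else f z) := by
    intro z
    show (if z ∈ A then 0 else f z) ≤ _
    by_cases hzy : z = y
    · subst hzy; simp [hy]
    · simp only [if_neg hzy]
      split
      · exact hfnn z
      · exact le_refl _
  have hsum2 : Summable (fun z => if z = y then (0:ℝ) else f z) := by
    apply summable_finsupp
    apply (N.stepf_supp_finite hasupp).subset
    intro z hz
    simp only [Set.mem_setOf_eq] at hz ⊢
    by_cases hzy : z = y
    · simp [hzy] at hz
    · simpa [hzy] using hz
  have h1 : (∑' z, N.avoid A (n+1) x z) ≤ ∑' z, (if z = y then 0 else f z) :=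
    Summable.tsum_le_tsum hle (summable_finsupp (N.avoid_supp_finite A (n+1) x)) hsum2
  have h2 : (∑' z, (if z = y then (0:ℝ) else f z)) + f y = ∑' z, f z := by
    rw [Summable.tsum_eq_add_tsum_ite hfsum y]; ring
  have h3 : ∑' z, f z = ∑' z, N.avoid A n x z := N.tsum_stepf hasupp
  linarith

lemma avoid_mass_mono (A : Set V) (x : V) (n : ℕ) (y : V) (hy : y ∈ A) :
    ∑' z, N.avoid A (n+1) x z ≤ ∑' z, N.avoid A n x z := by
  have := N.avoid_mass_step A x n y hy
  have h2 : 0 ≤ ∑' w, N.avoid A n x w * N.p w y :=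
    tsum_nonneg fun w => mul_nonneg (N.avoid_nonneg A n x w) (N.p_nonneg w y)
  linarith

lemma avoid_mass_le_one (A : Set V) (x : V) (hA : A.Nonempty) (n : ℕ) :
    ∑' z, N.avoid A n x z ≤ 1 := by
  induction n with
  | zero =>
    have : ∀ z ∉ ({x} : Finset V), N.avoid A 0 x z = 0 := by
      intro z hz
      show (if x = z ∧ x ∉ A then 1 else 0) = 0
      rw [if_neg]
      intro ⟨h1, _⟩
      exact hz (by simp [h1.symm])
    rw [tsum_eq_sum this]
    simp only [Finset.sum_singleton]
    show (if x = x ∧ x ∉ A then 1 else 0) ≤ 1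
    split <;> norm_num
  | succ n ih =>
    obtain ⟨y, hy⟩ := hA
    exact le_trans (N.avoid_mass_mono A x n y hy) ih

end Network
namespace Network
variable {V : Type*} (N : Network V)

/-- Delayed-kill walk: starts at `y`, killed on hitting `{o,y}` at times `≥ 1`. -/
noncomputable def aA (o y : V) : ℕ → V → ℝ
  | 0, z => if z = y then 1 else 0
  | n+1, z => if z = o ∨ z = y then 0 else ∑' w, aA o y n w * N.p w z

/-- First-return-to-`y`-avoiding-`o` probabilities, starting from `y`. -/
noncomputable def fr (o y : V) : ℕ → ℝ
  | 0 => 0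
  | n+1 => ∑' w, N.aA o y n w * N.p w y

/-- First-hit-of-`y`-avoiding-`o` probabilities, starting from `x`. -/
noncomputable def fh (o x y : V) : ℕ → ℝ
  | 0 => if x = y then 1 else 0
  | n+1 => ∑' w, N.avoid {o, y} n x w * N.p w y

lemma avoid_mem_zero (A : Set V) (n : ℕ) (x z : V) (hz : z ∈ A) :
    N.avoid A n x z = 0 := by
  cases n with
  | zero => exact if_neg (fun h => h.2 (h.1 ▸ hz))
  | succ n => exact if_pos hz

lemma aA_nonneg (o y : V) : ∀ (n : ℕ) (z : V), 0 ≤ N.aA o y n z := by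
  intro n
  induction n with
  | zero => intro z; unfold aA; split <;> norm_num
  | succ n ih =>
    intro z
    show (0:ℝ) ≤ if z = o ∨ z = y then 0 else ∑' w, N.aA o y n w * N.p w z
    split
    · exact le_refl _
    · exact tsum_nonneg fun w => mul_nonneg (ih w) (N.p_nonneg w z)

lemma aA_supp_finite (o y : V) (n : ℕ) : {z | N.aA o y n z ≠ 0}.Finite := by
  induction n with
  | zero =>
    apply Set.Finite.subset (Set.finite_singleton y)
    intro z hz
    simp only [Set.mem_setOf_eq, Network.aA] at hz
    by_contra hzy
    exact hz (if_neg (by simpa using hzy))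
  | succ n ih =>
    apply Set.Finite.subset (ih.biUnion (fun w _ => N.p_supp_finite w))
    intro z hz
    simp only [Set.mem_setOf_eq] at hz
    have hdef : N.aA o y (n+1) z
        = if z = o ∨ z = y then 0 else ∑' w, N.aA o y n w * N.p w z := rfl
    rw [hdef] at hz
    have hsum : (∑' w, N.aA o y n w * N.p w z) ≠ 0 := by
      intro h0; rw [h0] at hz; simp at hz
    have : ∃ w, N.aA o y n w * N.p w z ≠ 0 := by
      by_contra hall
      push_neg at hall
      exact hsum (by simp [hall])
    obtain ⟨w, hw⟩ := this
    exact Set.mem_biUnion (left_ne_zero_of_mul hw) (right_ne_zero_of_mul hw)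

lemma fr_nonneg (o y : V) (n : ℕ) : 0 ≤ N.fr o y n := by
  cases n with
  | zero => exact le_refl 0
  | succ n => exact tsum_nonneg fun w => mul_nonneg (N.aA_nonneg o y n w) (N.p_nonneg w y)

lemma fh_nonneg (o x y : V) (n : ℕ) : 0 ≤ N.fh o x y n := by
  cases n with
  | zero => show (0:ℝ) ≤ if x = y then 1 else 0; split <;> norm_num
  | succ n => exact tsum_nonneg fun w => mul_nonneg (N.avoid_nonneg _ n x w) (N.p_nonneg w y)

lemma tsum_aA_zero (o y : V) : ∑' z, N.aA o y 0 z = 1 := by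
  show (∑' z, if z = y then (1:ℝ) else 0) = 1
  exact tsum_ite_eq y 1

/-- quantitative mass decrease for the delayed-kill walk. -/
lemma aA_mass_step (o y : V) (hoy : y ≠ o) (n : ℕ) :
    (∑' z, N.aA o y (n+1) z) + N.fr o y (n+1) + (∑' w, N.aA o y n w * N.p w o)
      ≤ ∑' z, N.aA o y n z := by
  classical
  set f : V → ℝ := fun z => ∑' w, N.aA o y n w * N.p w z with hf
  have hasupp := N.aA_supp_finite o y n
  have hfsum : Summable f := N.summable_stepf hasupp
  have hfnn : ∀ z, 0 ≤ f z := N.stepf_nonneg (fun w => N.aA_nonneg o y n w)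
  have hle : ∀ z, N.aA o y (n+1) z ≤ (if z = y then 0 else if z = o then 0 else f z) := by
    intro z
    show (if z = o ∨ z = y then 0 else f z) ≤ _
    by_cases hzy : z = y
    · simp [hzy]
    · by_cases hzo : z = o
      · simp [hzo, hzy]
      · rw [if_neg (by tauto), if_neg hzy, if_neg hzo]
  have hsum1 : Summable (fun z => if z = o then (0:ℝ) else f z) := by
    apply summable_finsupp
    apply (N.stepf_supp_finite hasupp).subset
    intro z hz
    simp only [Set.mem_setOf_eq] at hz ⊢
    by_cases hzo : z = o
    · simp [hzo] at hz
    · simpa [hzo] using hz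
  have hsum2 : Summable (fun z => if z = y then (0:ℝ) else if z = o then 0 else f z) := by
    apply summable_finsupp
    apply (N.stepf_supp_finite hasupp).subset
    intro z hz
    simp only [Set.mem_setOf_eq] at hz ⊢
    by_cases hzy : z = y
    · simp [hzy] at hz
    · by_cases hzo : z = o
      · simp [hzy, hzo] at hz
      · simpa [hzy, hzo] using hz
  have h1 : (∑' z, N.aA o y (n+1) z) ≤ ∑' z, (if z = y then 0 else if z = o then 0 else f z) :=
    Summable.tsum_le_tsum hle (summable_finsupp (N.aA_supp_finite o y (n+1))) hsum2
  have h2 : (∑' z, (if z = o then (0:ℝ) else f z)) + f o = ∑' z, f z := by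
    rw [Summable.tsum_eq_add_tsum_ite hfsum o]; ring
  have h3 : (∑' z, (if z = y then (0:ℝ) else if z = o then 0 else f z))
      + (if y = o then (0:ℝ) else f y) = ∑' z, (if z = o then (0:ℝ) else f z) := by
    rw [Summable.tsum_eq_add_tsum_ite hsum1 y]
    ring
  have h4 : (if y = o then (0:ℝ) else f y) = f y := if_neg hoy
  have h5 : ∑' z, f z = ∑' z, N.aA o y n z := N.tsum_stepf hasupp
  have hfr : N.fr o y (n+1) = f y := rfl
  have hfo : (∑' w, N.aA o y n w * N.p w o) = f o := rfl
  linarith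

end Network
namespace Network
variable {V : Type*} (N : Network V)

lemma summable_aA_mul (o y : V) (n : ℕ) (g : V → ℝ) :
    Summable (fun w => N.aA o y n w * g w) :=
  summable_finsupp <| (N.aA_supp_finite o y n).subset
    (fun w hw => left_ne_zero_of_mul hw)

lemma p_pos {x y : V} (h : 0 < N.c x y) : 0 < N.p x y := div_pos h (N.cTot_pos x)

lemma aA_total (o y : V) (hoy : y ≠ o) (n : ℕ) :
    (∑' z, N.aA o y n z)
      + ∑ k ∈ Finset.range n, (N.fr o y (k+1) + ∑' w, N.aA o y k w * N.p w o) ≤ 1 := by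
  induction n with
  | zero => simp [N.tsum_aA_zero o y]
  | succ n ih =>
    have hstep := N.aA_mass_step o y hoy n
    rw [Finset.sum_range_succ]
    linarith

lemma fr_sum_le (o y : V) (hoy : y ≠ o) (k0 : ℕ) (n : ℕ) :
    ∑ k ∈ Finset.range n, N.fr o y (k+1)
      ≤ 1 - (∑' w, N.aA o y k0 w * N.p w o) := by
  set m := max n (k0 + 1) with hm
  have htot := N.aA_total o y hoy m
  rw [Finset.sum_add_distrib] at htot
  have h1 : ∑ k ∈ Finset.range n, N.fr o y (k+1) ≤ ∑ k ∈ Finset.range m, N.fr o y (k+1) :=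
    Finset.sum_le_sum_of_subset_of_nonneg
      (Finset.range_subset_range.2 (le_max_left _ _))
      (fun k _ _ => N.fr_nonneg o y (k+1))
  have h2 : (∑' w, N.aA o y k0 w * N.p w o)
      ≤ ∑ k ∈ Finset.range m, ∑' w, N.aA o y k w * N.p w o :=
    Finset.single_le_sum (f := fun k => ∑' w, N.aA o y k w * N.p w o)
      (fun k _ => tsum_nonneg fun w => mul_nonneg (N.aA_nonneg o y k w) (N.p_nonneg w o))
      (Finset.mem_range.2 (lt_of_lt_of_le (Nat.lt_succ_self k0) (le_max_right _ _)))
  have h3 : 0 ≤ ∑' z, N.aA o y m z := tsum_nonneg (N.aA_nonneg o y m)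
  linarith

lemma exists_path (o y : V) : ∃ n : ℕ, ∃ π : ℕ → V,
      π 0 = y ∧ π n = o ∧ ∀ i < n, 0 < N.c (π i) (π (i+1)) := by
    induction N.conn y o with
    | refl => exact ⟨0, fun _ => y, rfl, rfl, fun i hi => absurd hi (by omega)⟩
    | @tail b c hab hbc ih =>
      obtain ⟨n, π, h0, hn, he⟩ := ih
      refine ⟨n + 1, fun i => if i ≤ n then π i else c,
        by simp [h0], by simp [show ¬ (n+1 ≤ n) by omega], ?_⟩
      intro i hi
      by_cases hin : i < n
      · simp only [if_pos hin.le, if_pos (Nat.succ_le_of_lt hin)]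
        exact he i hin
      · have hieq : i = n := by omega
        subst hieq
        simp only [if_pos (le_refl i), if_neg (by omega : ¬ i + 1 ≤ i)]
        rw [hn]
        exact hbc

lemma exists_escape (o y : V) (hoy : y ≠ o) :
    ∃ k : ℕ, 0 < ∑' w, N.aA o y k w * N.p w o := by
  classical
  have hex := N.exists_path o y
  obtain ⟨π, hπ0, hπm, hπe⟩ := Nat.find_spec hex
  set m := Nat.find hex with hmdef
  have hm1 : 1 ≤ m := by
    rcases Nat.eq_zero_or_pos m with h | h
    · exfalso; apply hoy; rw [← hπ0, ← hπm, h]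
    · exact h
  have hno : ∀ i, 0 < i → i < m → π i ≠ o := by
    intro i hi0 him hio
    exact Nat.find_min hex him ⟨π, hπ0, hio, fun j hj => hπe j (by omega)⟩
  have hny : ∀ i, 0 < i → i < m → π i ≠ y := by
    intro i hi0 him hiy
    apply Nat.find_min hex (show m - i < m by omega)
    refine ⟨fun j => π (i + j), by simpa using hiy, ?_, ?_⟩
    · show π (i + (m - i)) = o
      have heq : i + (m - i) = m := by omega
      rw [heq, hπm]
    · intro j hj
      show 0 < N.c (π (i + j)) (π (i + (j+1)))
      have heq : i + (j + 1) = (i + j) + 1 := by omega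
      rw [heq]
      exact hπe (i + j) (by omega)
  have hchain : ∀ k, k < m →
      (∏ i ∈ Finset.range k, N.p (π i) (π (i+1))) ≤ N.aA o y k (π k) := by
    intro k
    induction k with
    | zero =>
      intro _
      simp only [Finset.range_zero, Finset.prod_empty, hπ0]
      show (1:ℝ) ≤ if y = y then 1 else 0
      simp
    | succ k ih =>
      intro hkm
      have hkm' : k < m := by omega
      have h1 : N.aA o y (k+1) (π (k+1))
          = ∑' w, N.aA o y k w * N.p w (π (k+1)) := by
        show (if π (k+1) = o ∨ π (k+1) = y then 0 else _) = _
        rw [if_neg]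
        push_neg
        exact ⟨hno (k+1) (by omega) hkm, hny (k+1) (by omega) hkm⟩
      have h2 : N.aA o y k (π k) * N.p (π k) (π (k+1))
          ≤ ∑' w, N.aA o y k w * N.p w (π (k+1)) :=
        Summable.le_tsum (N.summable_aA_mul o y k _) (π k)
          (fun w _ => mul_nonneg (N.aA_nonneg o y k w) (N.p_nonneg w _))
      rw [Finset.prod_range_succ, h1]
      refine le_trans ?_ h2
      exact mul_le_mul_of_nonneg_right (ih hkm') (N.p_nonneg _ _)
  refine ⟨m - 1, ?_⟩
  have hlast : 0 < N.p (π (m-1)) o := by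
    have := hπe (m - 1) (by omega)
    have heq : m - 1 + 1 = m := by omega
    rw [heq, hπm] at this
    exact N.p_pos this
  have hprod : 0 < ∏ i ∈ Finset.range (m-1), N.p (π i) (π (i+1)) :=
    Finset.prod_pos (fun i hi => N.p_pos (hπe i (by
      have := Finset.mem_range.1 hi; omega)))
  have hterm : 0 < N.aA o y (m-1) (π (m-1)) * N.p (π (m-1)) o := by
    apply mul_pos _ hlast
    exact lt_of_lt_of_le hprod (hchain (m-1) (by omega))
  refine lt_of_lt_of_le hterm ?_
  exact Summable.le_tsum (N.summable_aA_mul o y (m-1) _) (π (m-1))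
    (fun w _ => mul_nonneg (N.aA_nonneg o y (m-1) w) (N.p_nonneg w o))

end Network
namespace Network
variable {V : Type*} (N : Network V)

lemma avoid_step (A : Set V) (n : ℕ) (x z : V) (hz : z ∉ A) :
    N.avoid A (n+1) x z = ∑' w, N.avoid A n x w * N.p w z := if_neg hz

lemma not_mem_singleton_o {o z : V} (hzo : z ≠ o) : z ∉ ({o} : Set V) := by
  simpa using hzo

/-- Renewal identity at the diagonal start. -/
lemma renewal_yy (o y : V) (hoy : y ≠ o) :
    ∀ (n : ℕ) (z : V), N.avoid {o} n y z
      = N.aA o y n z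
        + ∑ k ∈ Finset.range n, N.fr o y (k+1) * N.avoid {o} (n-1-k) y z := by
  intro n
  induction n with
  | zero =>
    intro z
    simp only [Finset.range_zero, Finset.sum_empty, add_zero]
    show (if y = z ∧ y ∉ ({o} : Set V) then (1:ℝ) else 0) = if z = y then 1 else 0
    by_cases hzy : z = y
    · subst hzy
      rw [if_pos ⟨rfl, not_mem_singleton_o hoy⟩, if_pos rfl]
    · rw [if_neg (fun hc => hzy hc.1.symm), if_neg hzy]
  | succ n ih =>
    intro z
    by_cases hzo : z = o
    · rw [N.avoid_mem_zero {o} (n+1) y z (by simp [hzo])]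
      have h1 : N.aA o y (n+1) z = 0 := if_pos (Or.inl hzo)
      have h2 : ∀ k ∈ Finset.range (n+1),
          N.fr o y (k+1) * N.avoid {o} (n+1-1-k) y z = 0 := fun k _ => by
        rw [N.avoid_mem_zero {o} _ y z (by simp [hzo]), mul_zero]
      rw [h1, Finset.sum_eq_zero h2, add_zero]
    · have hzA : z ∉ ({o} : Set V) := not_mem_singleton_o hzo
      rw [N.avoid_step _ _ _ _ hzA]
      have hsplit : ∀ w, N.avoid {o} n y w * N.p w z
          = N.aA o y n w * N.p w z
            + ∑ k ∈ Finset.range n,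
                N.fr o y (k+1) * (N.avoid {o} (n-1-k) y w * N.p w z) := by
        intro w
        rw [ih w, add_mul, Finset.sum_mul]
        congr 1
        exact Finset.sum_congr rfl (fun k _ => by ring)
      rw [tsum_congr hsplit,
        Summable.tsum_add (N.summable_aA_mul o y n _)
          (summable_sum (fun k _ =>
            (N.summable_avoid_mul {o} (n-1-k) y (fun w => N.p w z)).mul_left _)),
        Summable.tsum_finsetSum (fun k _ =>
          (N.summable_avoid_mul {o} (n-1-k) y (fun w => N.p w z)).mul_left _)]
      have hterm : ∀ k ∈ Finset.range n,
          (∑' w, N.fr o y (k+1) * (N.avoid {o} (n-1-k) y w * N.p w z))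
            = N.fr o y (k+1) * N.avoid {o} (n-k) y z := by
        intro k hk
        have hkn : k < n := Finset.mem_range.1 hk
        rw [tsum_mul_left]
        congr 1
        rw [← N.avoid_step {o} (n-1-k) y z hzA]
        congr 1
        omega
      rw [Finset.sum_congr rfl hterm]
      simp only [Nat.add_sub_cancel]
      rw [Finset.sum_range_succ]
      have hnn : n - n = 0 := Nat.sub_self n
      rw [hnn]
      by_cases hzy : z = y
      · rw [hzy]
        have h1 : N.aA o y (n+1) y = 0 := if_pos (Or.inr rfl)
        have h2 : N.avoid {o} 0 y y = 1 := by
          show (if y = y ∧ y ∉ ({o} : Set V) then (1:ℝ) else 0) = 1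
          rw [if_pos ⟨rfl, not_mem_singleton_o hoy⟩]
        have h3 : N.fr o y (n+1) = ∑' w, N.aA o y n w * N.p w y := rfl
        rw [h1, h2, h3]
        ring
      · have h1 : N.aA o y (n+1) z = ∑' w, N.aA o y n w * N.p w z := by
          show (if z = o ∨ z = y then (0:ℝ) else _) = _
          rw [if_neg (by tauto)]
        have h2 : N.avoid {o} 0 y z = 0 := by
          show (if y = z ∧ y ∉ ({o} : Set V) then (1:ℝ) else 0) = 0
          rw [if_neg (fun hc => hzy hc.1.symm)]
        rw [h1, h2]
        ring

/-- Renewal identity: first hit of `y` from `x`. -/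
lemma renewal_xy (o x y : V) (hx : x ≠ o) (hy : y ≠ o) :
    ∀ (n : ℕ) (z : V), N.avoid {o} n x z
      = N.avoid {o,y} n x z
        + ∑ k ∈ Finset.range (n+1), N.fh o x y k * N.avoid {o} (n-k) y z := by
  intro n
  induction n with
  | zero =>
    intro z
    simp only [zero_add, Finset.range_one, Finset.sum_singleton, Nat.sub_zero]
    by_cases hxy : x = y
    · subst hxy
      have h1 : N.avoid ({o,x} : Set V) 0 x z = 0 := by
        simp [Network.avoid]
      have h2 : N.fh o x x 0 = 1 := by simp [Network.fh]
      rw [h1, h2]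
      ring
    · have h2 : N.fh o x y 0 = 0 := by simp [Network.fh, hxy]
      have h1 : N.avoid ({o,y} : Set V) 0 x z = N.avoid {o} 0 x z := by
        simp [Network.avoid, Set.mem_insert_iff, Set.mem_singleton_iff, hxy, hx]
      rw [h2, h1]
      ring
  | succ n ih =>
    intro z
    by_cases hzo : z = o
    · rw [N.avoid_mem_zero {o} (n+1) x z (by simp [hzo]),
        N.avoid_mem_zero ({o,y} : Set V) (n+1) x z (Set.mem_insert_iff.2 (Or.inl hzo))]
      have h2 : ∀ k ∈ Finset.range (n+2),
          N.fh o x y k * N.avoid {o} (n+1-k) y z = 0 := fun k _ => by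
        rw [N.avoid_mem_zero {o} _ y z (by simp [hzo]), mul_zero]
      rw [Finset.sum_eq_zero h2, add_zero]
    · have hzA : z ∉ ({o} : Set V) := not_mem_singleton_o hzo
      rw [N.avoid_step _ _ _ _ hzA]
      have hsplit : ∀ w, N.avoid {o} n x w * N.p w z
          = N.avoid {o,y} n x w * N.p w z
            + ∑ k ∈ Finset.range (n+1),
                N.fh o x y k * (N.avoid {o} (n-k) y w * N.p w z) := by
        intro w
        rw [ih w, add_mul, Finset.sum_mul]
        congr 1
        exact Finset.sum_congr rfl (fun k _ => by ring)
      rw [tsum_congr hsplit,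
        Summable.tsum_add (N.summable_avoid_mul {o,y} n x _)
          (summable_sum (fun k _ =>
            (N.summable_avoid_mul {o} (n-k) y (fun w => N.p w z)).mul_left _)),
        Summable.tsum_finsetSum (fun k _ =>
          (N.summable_avoid_mul {o} (n-k) y (fun w => N.p w z)).mul_left _)]
      have hterm : ∀ k ∈ Finset.range (n+1),
          (∑' w, N.fh o x y k * (N.avoid {o} (n-k) y w * N.p w z))
            = N.fh o x y k * N.avoid {o} (n+1-k) y z := by
        intro k hk
        have hkn : k < n + 1 := Finset.mem_range.1 hk
        rw [tsum_mul_left]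
        congr 1
        rw [← N.avoid_step {o} (n-k) y z hzA]
        congr 1
        omega
      rw [Finset.sum_congr rfl hterm]
      rw [Finset.sum_range_succ (n := n+1)]
      have hnn : n + 1 - (n+1) = 0 := Nat.sub_self (n+1)
      rw [hnn]
      by_cases hzy : z = y
      · rw [hzy]
        have h1 : N.avoid ({o,y} : Set V) (n+1) x y = 0 :=
          N.avoid_mem_zero _ _ _ _ (Set.mem_insert_iff.2 (Or.inr rfl))
        have h2 : N.avoid {o} 0 y y = 1 := by
          show (if y = y ∧ y ∉ ({o} : Set V) then (1:ℝ) else 0) = 1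
          rw [if_pos ⟨rfl, not_mem_singleton_o hy⟩]
        have h3 : N.fh o x y (n+1) = ∑' w, N.avoid {o,y} n x w * N.p w y := rfl
        rw [h1, h2, h3]
        ring
      · have hzmem : z ∉ ({o,y} : Set V) := by
          intro hc
          rcases Set.mem_insert_iff.1 hc with h | h
          · exact hzo h
          · exact hzy (by simpa using h)
        have h1 : N.avoid ({o,y} : Set V) (n+1) x z
            = ∑' w, N.avoid {o,y} n x w * N.p w z := N.avoid_step _ _ _ _ hzmem
        have h2 : N.avoid {o} 0 y z = 0 := by
          show (if y = z ∧ y ∉ ({o} : Set V) then (1:ℝ) else 0) = 0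
          rw [if_neg (fun hc => hzy hc.1.symm)]
        rw [h1, h2]
        ring

end Network
namespace Network
variable {V : Type*} (N : Network V)

lemma conv_sum_le (u v : ℕ → ℝ) (hu : ∀ n, 0 ≤ u n) (hv : ∀ n, 0 ≤ v n) (L : ℕ) :
    ∑ n ∈ Finset.range L, ∑ k ∈ Finset.range (n+1), u k * v (n-k)
      ≤ (∑ k ∈ Finset.range L, u k) * (∑ j ∈ Finset.range L, v j) := by
  classical
  rw [Finset.sum_sigma']
  rw [Finset.sum_mul_sum]
  rw [← Finset.sum_product']
  have hinj : Set.InjOn (fun p : (Σ _ : ℕ, ℕ) => (p.2, p.1 - p.2))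
      ((Finset.range L).sigma (fun n => Finset.range (n+1))) := by
    rintro ⟨n, k⟩ hp ⟨n', k'⟩ hq hpq
    simp only [Finset.mem_coe, Finset.mem_sigma, Finset.mem_range] at hp hq
    simp only [Prod.mk.injEq] at hpq
    have h1 : k = k' := hpq.1
    have h2 : n - k = n' - k' := hpq.2
    have : n = n' := by omega
    subst this; subst h1; rfl
  have himg : ∑ p ∈ ((Finset.range L).sigma (fun n => Finset.range (n+1))),
        u p.2 * v (p.1 - p.2)
      = ∑ q ∈ (((Finset.range L).sigma (fun n => Finset.range (n+1))).image
          (fun p => (p.2, p.1 - p.2))), u q.1 * v q.2 := by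
    rw [Finset.sum_image (fun p hp q hq => hinj (Finset.mem_coe.2 hp) (Finset.mem_coe.2 hq))]
  rw [himg]
  apply Finset.sum_le_sum_of_subset_of_nonneg
  · intro q hq
    simp only [Finset.mem_image, Finset.mem_sigma, Finset.mem_range] at hq
    obtain ⟨⟨n, k⟩, ⟨hn, hk⟩, hq'⟩ := hq
    simp only [Finset.mem_product, Finset.mem_range]
    subst hq'
    simp only at hn hk ⊢
    omega
  · intro q _ _
    exact mul_nonneg (hu _) (hv _)

lemma avoid_diag_zero_one (o y : V) (hoy : y ≠ o) : N.avoid {o} 0 y y = 1 := by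
  show (if y = y ∧ y ∉ ({o} : Set V) then (1:ℝ) else 0) = 1
  rw [if_pos ⟨rfl, not_mem_singleton_o hoy⟩]

lemma aA_diag_zero (o y : V) (n : ℕ) : N.aA o y (n+1) y = 0 := if_pos (Or.inr rfl)

lemma a_renewal (o y : V) (hoy : y ≠ o) (n : ℕ) :
    N.avoid {o} (n+1) y y
      = ∑ k ∈ Finset.range (n+1), N.fr o y (k+1) * N.avoid {o} (n-k) y y := by
  have h := N.renewal_yy o y hoy (n+1) y
  rw [N.aA_diag_zero, zero_add] at h
  simpa only [Nat.add_sub_cancel] using h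

lemma diag_partial_bound (o y : V) (hoy : y ≠ o) :
    ∃ C : ℝ, 0 ≤ C ∧ ∀ M, ∑ n ∈ Finset.range M, N.avoid {o} n y y ≤ C := by
  obtain ⟨k0, hk0⟩ := N.exists_escape o y hoy
  set ε := ∑' w, N.aA o y k0 w * N.p w o with hε
  have hfr : ∀ n, ∑ k ∈ Finset.range n, N.fr o y (k+1) ≤ 1 - ε := N.fr_sum_le o y hoy k0
  have hε1 : ε ≤ 1 := by have := hfr 0; simp at this; linarith
  refine ⟨1/ε, by positivity, ?_⟩
  intro M
  cases M with
  | zero => simp; positivity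
  | succ L =>
    set A := ∑ n ∈ Finset.range (L+1), N.avoid {o} n y y with hA
    have hAnn : 0 ≤ A := Finset.sum_nonneg (fun n _ => N.avoid_nonneg _ n y y)
    have key : A ≤ 1 + (1 - ε) * A := by
      have h0 : N.avoid {o} 0 y y = 1 := N.avoid_diag_zero_one o y hoy
      have hA' : A = (∑ n ∈ Finset.range L, N.avoid {o} (n+1) y y) + 1 := by
        rw [hA, Finset.sum_range_succ', h0]
      have hsum : ∑ n ∈ Finset.range L, N.avoid {o} (n+1) y y
          ≤ (1 - ε) * A := by
        have e1 : ∀ n ∈ Finset.range L, N.avoid {o} (n+1) y y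
            = ∑ k ∈ Finset.range (n+1), N.fr o y (k+1) * N.avoid {o} (n-k) y y :=
          fun n _ => N.a_renewal o y hoy n
        rw [Finset.sum_congr rfl e1]
        calc ∑ n ∈ Finset.range L, ∑ k ∈ Finset.range (n+1),
                N.fr o y (k+1) * N.avoid {o} (n-k) y y
            ≤ (∑ k ∈ Finset.range L, N.fr o y (k+1))
              * (∑ j ∈ Finset.range L, N.avoid {o} j y y) :=
              conv_sum_le _ _ (fun n => N.fr_nonneg o y (n+1))
                (fun n => N.avoid_nonneg _ n y y) L
          _ ≤ (1 - ε) * A := by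
              apply mul_le_mul (hfr L)
              · exact Finset.sum_le_sum_of_subset_of_nonneg
                  (Finset.range_subset_range.2 (Nat.le_succ L))
                  (fun n _ _ => N.avoid_nonneg _ n y y)
              · exact Finset.sum_nonneg (fun n _ => N.avoid_nonneg _ n y y)
              · linarith
      linarith
    have hεA : ε * A ≤ 1 := by nlinarith
    rw [le_div_iff₀ hk0]
    nlinarith

lemma avoid_start_mem_zero (A : Set V) (x : V) (hx : x ∈ A) :
    ∀ (n : ℕ) (z : V), N.avoid A n x z = 0 := by
  intro n
  induction n with
  | zero =>
    intro z
    exact if_neg (fun hc => hc.2 hx)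
  | succ n ih =>
    intro z
    show (if z ∈ A then (0:ℝ) else ∑' w, N.avoid A n x w * N.p w z) = 0
    split
    · rfl
    · rw [tsum_congr (fun w => by rw [ih w, zero_mul]), tsum_zero]

lemma fh_sum_le (o x y : V) (hx : x ≠ o) (hy : y ≠ o) (n : ℕ) :
    ∑ k ∈ Finset.range n, N.fh o x y k ≤ 1 := by
  cases n with
  | zero => simp
  | succ L =>
    rw [Finset.sum_range_succ']
    by_cases hxy : x = y
    · have h0 : N.fh o x y 0 = 1 := by simp [Network.fh, hxy]
      have hk : ∀ k ∈ Finset.range L, N.fh o x y (k+1) = 0 := by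
        intro k _
        show (∑' w, N.avoid {o,y} k x w * N.p w y) = 0
        rw [tsum_congr (fun w => by
          rw [N.avoid_start_mem_zero {o,y} x (by simp [hxy]) k w, zero_mul]), tsum_zero]
      rw [h0, Finset.sum_congr rfl hk]
      simp
    · have h0 : N.fh o x y 0 = 0 := by simp [Network.fh, hxy]
      rw [h0, add_zero]
      have hxA : x ∉ ({o,y} : Set V) := by
        intro hc
        rcases Set.mem_insert_iff.1 hc with h | h
        · exact hx h
        · exact hxy (by simpa using h)
      have key : ∀ m, (∑' z, N.avoid {o,y} m x z)
          + ∑ k ∈ Finset.range m, N.fh o x y (k+1) ≤ 1 := by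
        intro m
        induction m with
        | zero =>
          simp only [Finset.range_zero, Finset.sum_empty, add_zero]
          exact N.avoid_mass_le_one {o,y} x ⟨o, by simp⟩ 0
        | succ m ih =>
          have hstep := N.avoid_mass_step {o,y} x m y (by simp)
          have hfh : N.fh o x y (m+1) = ∑' w, N.avoid {o,y} m x w * N.p w y := rfl
          rw [Finset.sum_range_succ, hfh]
          linarith
      have := key L
      have hm : 0 ≤ ∑' z, N.avoid {o,y} L x z :=
        tsum_nonneg (fun z => N.avoid_nonneg _ L x z)
      linarith

lemma xy_renewal (o x y : V) (hx : x ≠ o) (hy : y ≠ o) (n : ℕ) :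
    N.avoid {o} n x y
      = ∑ k ∈ Finset.range (n+1), N.fh o x y k * N.avoid {o} (n-k) y y := by
  have h := N.renewal_xy o x y hx hy n y
  rw [N.avoid_mem_zero ({o,y} : Set V) n x y (by simp), zero_add] at h
  exact h

lemma summable_avoid_green (o x y : V) (hx : x ≠ o) (hy : y ≠ o) :
    Summable (fun n => N.avoid {o} n x y) := by
  obtain ⟨C, hC0, hC⟩ := N.diag_partial_bound o y hy
  apply summable_of_sum_range_le (c := C) (fun n => N.avoid_nonneg _ n x y)
  intro M
  cases M with
  | zero => simpa using hC0
  | succ L =>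
    have e1 : ∀ n ∈ Finset.range (L+1), N.avoid {o} n x y
        = ∑ k ∈ Finset.range (n+1), N.fh o x y k * N.avoid {o} (n-k) y y :=
      fun n _ => N.xy_renewal o x y hx hy n
    rw [Finset.sum_congr rfl e1]
    calc ∑ n ∈ Finset.range (L+1), ∑ k ∈ Finset.range (n+1),
            N.fh o x y k * N.avoid {o} (n-k) y y
        ≤ (∑ k ∈ Finset.range (L+1), N.fh o x y k)
          * (∑ j ∈ Finset.range (L+1), N.avoid {o} j y y) :=
          conv_sum_le _ _ (fun k => N.fh_nonneg o x y k)
            (fun j => N.avoid_nonneg _ j y y) (L+1)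
      _ ≤ 1 * C := by
          apply mul_le_mul (N.fh_sum_le o x y hx hy (L+1)) (hC (L+1))
          · exact Finset.sum_nonneg (fun j _ => N.avoid_nonneg _ j y y)
          · norm_num
      _ = C := one_mul C

end Network
namespace Network
variable {V : Type*} (N : Network V)

lemma ph_def (h : V → ℝ) (x y : V) : N.ph h x y = N.p x y * h y / h x := rfl

lemma pot_edge_zero {o : V} {h : V → ℝ} (hpot : N.IsPotential o h)
    {z : V} (hz0 : h z = 0) (hzo : z ≠ o) : ∀ w, N.c z w * h w = 0 := by
  have hlap : N.lap h z = 0 := hpot.2.2.2 z hzo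
  have heq : ∀ w, N.c z w * (h w - h z) = N.c z w * h w := by
    intro w; rw [hz0]; ring
  have hlap' : (∑' w, N.c z w * h w) = 0 := by
    rw [← tsum_congr heq]; exact hlap
  have hsum : Summable (fun w => N.c z w * h w) :=
    summable_finsupp ((N.c_supp_finite z).subset (fun w hw => left_ne_zero_of_mul hw))
  intro w
  have hnn : ∀ u, 0 ≤ N.c z u * h u := fun u => mul_nonneg (N.nonneg z u) (hpot.1 u)
  have hle : N.c z w * h w ≤ 0 := hlap' ▸ Summable.le_tsum hsum w (fun u _ => hnn u)
  exact le_antisymm hle (hnn w)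

lemma pot_zero_avoid {o : V} {h : V → ℝ} (hpot : N.IsPotential o h) :
    ∀ (n : ℕ) (x z : V), 0 < h x → h z = 0 → N.avoid {o} n x z = 0 := by
  intro n
  induction n with
  | zero =>
    intro x z hx hz
    refine if_neg (fun hc => ?_)
    rw [hc.1, hz] at hx
    exact lt_irrefl 0 hx
  | succ n ih =>
    intro x z hx hz
    by_cases hzo : z = o
    · exact N.avoid_mem_zero {o} (n+1) x z (by simp [hzo])
    · rw [N.avoid_step {o} n x z (not_mem_singleton_o hzo)]
      rw [tsum_congr (fun w => ?_), tsum_zero]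
      by_cases hw : h w = 0
      · rw [ih x w hx hw, zero_mul]
      · have hcz : N.c z w * h w = 0 := N.pot_edge_zero hpot hz hzo w
        have hc0 : N.c w z = 0 := by
          rw [N.symm w z]
          exact (mul_eq_zero.1 hcz).resolve_right hw
        have hp0 : N.p w z = 0 := by
          rw [Network.p, hc0, zero_div]
        rw [hp0, mul_zero]

lemma phstep_eq {o : V} {h : V → ℝ} (hpot : N.IsPotential o h) :
    ∀ (n : ℕ) (x y : V), 0 < h x → 0 < h y →
      N.phstep h n x y = N.avoid {o} n x y * h y / h x := by
  intro n
  induction n with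
  | zero =>
    intro x y hx hy
    have hxo : x ≠ o := fun e => by rw [e, hpot.2.1] at hx; exact lt_irrefl 0 hx
    have h1 : N.phstep h 0 x y = if x = y then 1 else 0 := rfl
    have h2 : N.avoid {o} 0 x y = if x = y then 1 else 0 := by
      show (if x = y ∧ x ∉ ({o} : Set V) then (1:ℝ) else 0) = _
      by_cases hxy : x = y
      · rw [if_pos ⟨hxy, not_mem_singleton_o hxo⟩, if_pos hxy]
      · rw [if_neg (fun hc => hxy hc.1), if_neg hxy]
    rw [h1, h2]
    by_cases hxy : x = y
    · subst hxy
      rw [if_pos rfl, one_mul, div_self hx.ne']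
    · rw [if_neg hxy, zero_mul, zero_div]
  | succ n ih =>
    intro x y hx hy
    have hyo : y ≠ o := fun e => by rw [e, hpot.2.1] at hy; exact lt_irrefl 0 hy
    have hstep : N.phstep h (n+1) x y = ∑' z, N.phstep h n x z * N.ph h z y := rfl
    have hterm : ∀ z, N.phstep h n x z * N.ph h z y
        = (N.avoid {o} n x z * N.p z y) * (h y / h x) := by
      intro z
      by_cases hz : h z = 0
      · rw [N.ph_def, hz, div_zero, mul_zero,
          N.pot_zero_avoid hpot n x z hx hz, zero_mul, zero_mul]
      · have hzpos : 0 < h z := lt_of_le_of_ne (hpot.1 z) (Ne.symm hz)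
        rw [ih x z hx hzpos, N.ph_def]
        field_simp
    rw [hstep, tsum_congr hterm, tsum_mul_right]
    rw [← N.avoid_step {o} n x y (not_mem_singleton_o hyo)]
    rw [mul_div_assoc]

end Network

theorem hprocess_green_kernel' {V : Type*} (N : Network V)
    (o : V) (h : V → ℝ) (hpot : N.IsPotential o h) :
    ∀ x y : V, 0 < h x → 0 < h y →
      Summable (fun k => N.phstep h k x y) ∧
      (∑' k, N.phstep h k x y) = N.GreenK o x y * h y / h x := by
  intro x y hx hy
  have hxo : x ≠ o := fun e => by rw [e, hpot.2.1] at hx; exact lt_irrefl 0 hx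
  have hyo : y ≠ o := fun e => by rw [e, hpot.2.1] at hy; exact lt_irrefl 0 hy
  have hkey : ∀ k, N.phstep h k x y = N.avoid {o} k x y * (h y / h x) := by
    intro k
    rw [N.phstep_eq hpot k x y hx hy, mul_div_assoc]
  have hsummable : Summable (fun k => N.avoid {o} k x y) :=
    N.summable_avoid_green o x y hxo hyo
  constructor
  · have : (fun k => N.phstep h k x y) = fun k => N.avoid {o} k x y * (h y / h x) :=
      funext hkey
    rw [this]
    exact hsummable.mul_right _
  · rw [tsum_congr hkey, tsum_mul_right, ← mul_div_assoc]
    rfl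
/-- Green kernel of the `h`-process: for `x, y ∈ S_h = {h > 0}`,
`G^h(x,y) = G_o(x,y) h(y)/h(x)`; in particular the `h`-process is transient. -/
theorem hprocess_green_kernel {V : Type*} (N : Network V) (hrec : N.Recurrent)
    (o : V) (h : V → ℝ) (hpot : N.IsPotential o h) :
    ∀ x y : V, 0 < h x → 0 < h y →
      Summable (fun k => N.phstep h k x y) ∧
      (∑' k, N.phstep h k x y) = N.GreenK o x y * h y / h x := by
  exact hprocess_green_kernel' N o h hpot
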